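/- arXiv:2510.10988 — 2 statements merged into one kernel-verified Lean document; each statement's English description precedes it below -/
import Mathlib

section
/- If for every action j* ∈ A there exists a hypothesis h^{j*} ∈ H whose decision is constantly j* on B_p(x,γ) (local ρ-consistency), then the infimum over h ∈ H of the adversarial conditional risk Σ_{j ∈ A} μ̄_j(x) 1{j ∈ H_γ(h,x)} equals min_{j ∈ A} μ̄_j(x). -/
open Finset Classical

/-- Under local ρ-consistency (for every action j* there is a hypothesis whose decision
is constantly j* on the perturbation set B), the infimum over the hypothesis class of
the adversarial conditional risk equals the minimal expected cost. -/
theorem inf_adv_conditional_risk_eq_min (X : Type*) (N : ℕ) (hN : 0 < N)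
    (H : Set (X → Fin N)) (B : Set X) (hB : B.Nonempty) (x : X) (hx : x ∈ B)
    (μ : Fin N → ℝ) (hμ : ∀ j, 0 ≤ μ j)
    (hloc : ∀ jstar : Fin N, ∃ h ∈ H, ∀ x' ∈ B, h x' = jstar) :
    sInf ((fun h => ∑ j, μ j * (if ∃ x' ∈ B, h x' = j then (1:ℝ) else 0)) '' H) =
      univ.inf' (univ_nonempty_iff.mpr ⟨⟨0, hN⟩⟩) μ := by
  have hne : (Finset.univ : Finset (Fin N)).Nonempty := univ_nonempty_iff.mpr ⟨⟨0, hN⟩⟩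
  apply le_antisymm
  · -- upper bound: pick j* achieving the min, use the constant-j* hypothesis
    obtain ⟨jstar, -, hjs⟩ := exists_mem_eq_inf' hne μ
    obtain ⟨h, hH, hconst⟩ := hloc jstar
    rw [hjs]
    apply csInf_le
    · refine ⟨0, ?_⟩
      rintro r ⟨g, -, rfl⟩
      exact Finset.sum_nonneg fun j _ => mul_nonneg (hμ j) (by positivity)
    · refine ⟨h, hH, ?_⟩
      have : ∀ j : Fin N,
          μ j * (if ∃ x' ∈ B, h x' = j then (1:ℝ) else 0) =
          if j = jstar then μ jstar else 0 := by
        intro j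
        by_cases hj : j = jstar
        · subst hj
          rw [if_pos ⟨x, hx, hconst x hx⟩, if_pos rfl, mul_one]
        · rw [if_neg, if_neg hj, mul_zero]
          rintro ⟨x', hx', hx'j⟩
          exact hj ((hconst x' hx') ▸ hx'j.symm)
      simp [this]
  · -- lower bound
    obtain ⟨h0, hH0, -⟩ := hloc ⟨0, hN⟩
    apply le_csInf ⟨_, Set.mem_image_of_mem _ hH0⟩
    rintro r ⟨h, hH, rfl⟩
    calc univ.inf' hne μ ≤ μ (h x) := inf'_le _ (mem_univ _)
      _ = μ (h x) * (if ∃ x' ∈ B, h x' = h x then (1:ℝ) else 0) := by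
          rw [if_pos ⟨x, hx, rfl⟩, mul_one]
      _ ≤ ∑ j, μ j * (if ∃ x' ∈ B, h x' = j then (1:ℝ) else 0) := by
          apply Finset.single_le_sum (f := fun j => μ j *
            (if ∃ x' ∈ B, h x' = j then (1:ℝ) else 0)) ?_ (mem_univ _)
          intro j _
          exact mul_nonneg (hμ j) (by positivity)
end

section
/- For any decision rule h, E_p(h,x) - E_p*(x) ≥ (1/S(x)) · ΔC(h,x), where ΔC(h,x) = Σ_j μ̄_j(x) 1{j ∈ H_γ(h,x)} − min_j μ̄_j(x) is the true-loss calibration gap. -/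
open Finset Classical

lemma sSup_indicator_image {X : Type*} {N : ℕ} (B : Set X) (hB : B.Nonempty)
    (hhat : X → Fin N) (j : Fin N) :
    sSup ((fun x' => if hhat x' ≠ j then (1:ℝ) else 0) '' B) =
      if ∃ x' ∈ B, hhat x' ≠ j then 1 else 0 := by
  by_cases h : ∃ x' ∈ B, hhat x' ≠ j
  · simp only [h, if_true]
    obtain ⟨y, hy, hPy⟩ := h
    apply le_antisymm
    · apply csSup_le (hB.image _)
      rintro z ⟨w, hw, rfl⟩
      by_cases hw' : hhat w = j <;> simp [hw']
    · apply le_csSup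
      · exact ⟨1, by rintro z ⟨w, hw, rfl⟩; by_cases hw' : hhat w = j <;> simp [hw']⟩
      · exact ⟨y, hy, by simp [hPy]⟩
  · simp only [h, if_false]
    have himg : (fun x' => if hhat x' ≠ j then (1:ℝ) else 0) '' B = {0} := by
      apply Set.eq_singleton_iff_nonempty_unique_mem.mpr
      refine ⟨hB.image _, ?_⟩
      rintro z ⟨w, hw, rfl⟩
      simp only [if_neg (fun hP => h ⟨w, hw, hP⟩)]
    rw [himg, csSup_singleton]

/-- Combining both cases: for any decision rule, the adversarial 0-1 excess risk is
lower bounded by (1/S) times the true-loss calibration gap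
Σ_j μ̄_j 1{j ∈ H_γ(h,x)} - min_j μ̄_j. -/
theorem calibration_gap_comparison (X : Type*) (N : ℕ) (hN : 2 ≤ N)
    (hne : (univ : Finset (Fin N)).Nonempty)
    (μ : Fin N → ℝ) (hμ : ∀ j, 0 ≤ μ j)
    (M S : ℝ) (hM : M = ∑ i, μ i) (hMpos : 0 < M) (hS : S = (N - 1) * M)
    (p : Fin N → ℝ) (hp : ∀ j, p j = (M - μ j) / S)
    (B : Set X) (hB : B.Nonempty) (x : X) (hx : x ∈ B)
    (hhat : X → Fin N)
    (Ep Estar ΔC : ℝ)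
    (hEp : Ep = ∑ j, p j * sSup ((fun x' => if hhat x' ≠ j then (1:ℝ) else 0) '' B))
    (hEstar : Estar = 1 - univ.sup' hne p)
    (hΔC : ΔC = (∑ j, μ j * (if ∃ x' ∈ B, hhat x' = j then (1:ℝ) else 0))
                  - univ.inf' hne μ) :
    Ep - Estar ≥ (1 / S) * ΔC := by
  have hN1 : (1:ℝ) ≤ (N:ℝ) - 1 := by
    have : (2:ℝ) ≤ (N:ℝ) := by exact_mod_cast hN
    linarith
  have hSpos : 0 < S := by rw [hS]; nlinarith
  set m := univ.inf' hne μ with hm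
  obtain ⟨j1, _, hj1⟩ := Finset.exists_mem_eq_inf' hne μ
  have hmle : ∀ j, m ≤ μ j := fun j => Finset.inf'_le μ (mem_univ j)
  have hm0 : 0 ≤ m := by rw [hm, hj1]; exact hμ j1
  have hsupP : univ.sup' hne p = (M - m) / S := by
    apply le_antisymm
    · apply Finset.sup'_le
      intro j _
      rw [hp j]
      have h1 : M - μ j ≤ M - m := by linarith [hmle j]
      gcongr
    · have h2 : (M - m) / S = p j1 := by rw [hp j1, ← hj1]
      rw [h2]
      exact Finset.le_sup' p (mem_univ j1)
  have hsumμ : ∑ j, μ j = M := hM.symm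
  have hsump : ∑ j, p j = 1 := by
    have h3 : ∑ j, p j = ((N:ℝ) * M - M) / S := by
      simp only [hp, div_eq_mul_inv, ← Finset.sum_mul, Finset.sum_sub_distrib,
        Finset.sum_const, card_univ, Fintype.card_fin, nsmul_eq_mul, hsumμ]
    rw [h3, hS]
    field_simp
  have hEp' : Ep = ∑ j, p j * (if ∃ x' ∈ B, hhat x' ≠ j then (1:ℝ) else 0) := by
    rw [hEp]
    apply Finset.sum_congr rfl
    intro j _
    rw [sSup_indicator_image B hB hhat j]
  by_cases hc : ∀ x' ∈ B, hhat x' = hhat x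
  · -- constant case
    set j0 := hhat x with hj0
    have hind1 : ∀ j, (∃ x' ∈ B, hhat x' ≠ j) ↔ j ≠ j0 := by
      intro j
      constructor
      · rintro ⟨y, hy, hyj⟩ rfl
        exact hyj (hc y hy)
      · intro hj
        exact ⟨x, hx, fun h => hj (h ▸ rfl)⟩
    have hind2 : ∀ j, (∃ x' ∈ B, hhat x' = j) ↔ j = j0 := by
      intro j
      constructor
      · rintro ⟨y, hy, rfl⟩; exact hc y hy
      · rintro rfl; exact ⟨x, hx, rfl⟩
    have hEp2 : Ep = 1 - p j0 := by
      have hterm : ∀ j, p j * (if ∃ x' ∈ B, hhat x' ≠ j then (1:ℝ) else 0)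
          = p j - (if j = j0 then p j else 0) := by
        intro j
        by_cases h : j = j0
        · subst h; simp [hind1]
        · simp [hind1, h]
      rw [hEp', Finset.sum_congr rfl (fun j _ => hterm j), Finset.sum_sub_distrib, hsump,
        Finset.sum_ite_eq' univ j0 p]
      simp
    have hΔ2 : (∑ j, μ j * (if ∃ x' ∈ B, hhat x' = j then (1:ℝ) else 0)) = μ j0 := by
      have hterm : ∀ j, μ j * (if ∃ x' ∈ B, hhat x' = j then (1:ℝ) else 0)
          = if j = j0 then μ j else 0 := by
        intro j
        by_cases h : j = j0 <;> simp [hind2, h]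
      rw [Finset.sum_congr rfl (fun j _ => hterm j), Finset.sum_ite_eq' univ j0 μ]
      simp
    rw [hEp2, hEstar, hsupP, hΔC, hΔ2, hp j0, ge_iff_le]
    have : (1 - (M - μ j0) / S) - (1 - (M - m) / S) = (μ j0 - m) / S := by
      ring
    rw [this]
    rw [one_div, inv_mul_eq_div]
  · -- non-constant case
    push_neg at hc
    obtain ⟨y, hy, hyx⟩ := hc
    have hall : ∀ j, ∃ x' ∈ B, hhat x' ≠ j := by
      intro j
      by_cases h : hhat x = j
      · exact ⟨y, hy, h ▸ hyx⟩
      · exact ⟨x, hx, h⟩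
    have hEp2 : Ep = 1 := by
      rw [hEp']
      have hterm : ∀ j, p j * (if ∃ x' ∈ B, hhat x' ≠ j then (1:ℝ) else 0) = p j := by
        intro j; simp [hall j]
      rw [Finset.sum_congr rfl fun j _ => hterm j, hsump]
    have hT : (∑ j, μ j * (if ∃ x' ∈ B, hhat x' = j then (1:ℝ) else 0)) ≤ M := by
      rw [hM]
      apply Finset.sum_le_sum
      intro j _
      by_cases h : ∃ x' ∈ B, hhat x' = j <;> simp [h, hμ j]
    rw [hEp2, hEstar, hsupP, hΔC, ge_iff_le]
    set T := ∑ j, μ j * (if ∃ x' ∈ B, hhat x' = j then (1:ℝ) else 0) with hTdef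
    calc (1 / S) * (T - m) = (T - m) / S := by ring
      _ ≤ (M - m) / S := by
          have : T - m ≤ M - m := by linarith
          gcongr
      _ = 1 - (1 - (M - m) / S) := by ring
end
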